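/- Generalized characterization of dependency: for any intuitionistic Kripke model M, team t, and standard formulas α₁,…,αₙ,β, the following are equivalent: (1) M,t ⊨ ?α₁∧⋯∧?αₙ → ?β; (2) for all w,w' ∈ R[t], if T(w,αᵢ) and T(w',αᵢ) are both defined and equal for all i ≤ n, then T(w,β) and T(w',β) are both defined and equal; (3) there exists f : {0,1}ⁿ → {0,1} such that for every w ∈ R[t], if T(w,α₁),…,T(w,αₙ) are all defined then T(w,β) is defined and T(w,β) = f(T(w,α₁),…,T(w,αₙ)). -/

import Mathlib

/-- Formulas of the language L: atoms, ⊥, ∧, ∨, →, and inquisitive disjunction ⩾. -/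
inductive Formula (P : Type) : Type
  | atom : P → Formula P
  | bot  : Formula P
  | and  : Formula P → Formula P → Formula P
  | or   : Formula P → Formula P → Formula P
  | impl : Formula P → Formula P → Formula P
  | iorr : Formula P → Formula P → Formula P

namespace Formula

/-- Negation ¬φ := φ → ⊥. -/
def neg {P : Type} (φ : Formula P) : Formula P := Formula.impl φ Formula.bot

/-- Polar question ?φ := φ ⩾ ¬φ. -/
def question {P : Type} (φ : Formula P) : Formula P := Formula.iorr φ φ.neg

/-- A standard formula contains no occurrence of inquisitive disjunction ⩾. -/
def standard {P : Type} : Formula P → Prop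
  | atom _ => True
  | bot => True
  | and φ ψ => φ.standard ∧ ψ.standard
  | or φ ψ => φ.standard ∧ ψ.standard
  | impl φ ψ => φ.standard ∧ ψ.standard
  | iorr _ _ => False

end Formula

/-- An intuitionistic Kripke model: a partially ordered set of worlds with a
persistent valuation. -/
structure KripkeModel (P : Type) where
  W : Type
  R : W → W → Prop
  refl : ∀ w, R w w
  antisymm : ∀ w v, R w v → R v w → w = v
  trans : ∀ w v u, R w v → R v u → R w u
  V : W → P → Prop
  persistent : ∀ w v p, R w v → V w p → V v p

/-- R[t], the up-set generated by a team t. -/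
def KripkeModel.upset {P : Type} (M : KripkeModel P) (t : Set M.W) : Set M.W :=
  {v | ∃ w ∈ t, M.R w v}

/-- The support relation M,t ⊨ φ between teams and formulas. -/
def support {P : Type} (M : KripkeModel P) : Formula P → Set M.W → Prop
  | .atom p, t => ∀ w ∈ t, M.V w p
  | .bot, t => t = ∅
  | .and φ ψ, t => support M φ t ∧ support M ψ t
  | .or φ ψ, t => ∃ t₁ t₂, t = t₁ ∪ t₂ ∧ support M φ t₁ ∧ support M ψ t₂
  | .impl φ ψ, t => ∀ t', t' ⊆ M.upset t → support M φ t' → support M ψ t'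
  | .iorr φ ψ, t => support M φ t ∨ support M ψ t

/-- Truth at a world: M,w ⊨ φ iff M,{w} ⊨ φ. -/
def truth {P : Type} (M : KripkeModel P) (w : M.W) (φ : Formula P) : Prop :=
  support M φ {w}

/-- A formula is truth-conditional if support at a team amounts to truth at each world. -/
def truthConditional {P : Type} (φ : Formula P) : Prop :=
  ∀ (M : KripkeModel P) (t : Set M.W), support M φ t ↔ ∀ w ∈ t, truth M w φ

/-- The partial truth-value function: `tvalIs M w φ b` says T(w,φ) is defined with value b
(b = true for value 1, i.e. M,w ⊨ φ; b = false for value 0, i.e. M,w ⊨ ¬φ). -/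
def tvalIs {P : Type} (M : KripkeModel P) (w : M.W) (φ : Formula P) : Bool → Prop
  | true => truth M w φ
  | false => truth M w φ.neg

/-- Big conjunction of a list of formulas (empty conjunction is the verum ⊥→⊥). -/
def bigConj {P : Type} : List (Formula P) → Formula P
  | [] => Formula.impl Formula.bot Formula.bot
  | [φ] => φ
  | φ :: ψ :: rest => Formula.and φ (bigConj (ψ :: rest))

/-!
Standard formulas are truth-conditional, so a team supports `?α` exactly when `α` has one and the
same defined truth value at all its worlds. Hence (1) says: every subteam of `R[t]` on which the
`αᵢ` have a common profile `b` has a common value of `β`. Applied to the subteam of all worlds of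
profile `b` this yields the value `f b` of (3); applied to pairs it yields (2); and (2) gives (3)
back because a truth value, when defined, is unique.
-/

section Dependence

variable {W κ γ : Type*} {U : Set W} {A : W → κ → Prop} {B : W → γ → Prop}

theorem exists_fun_iff_forall_subset :
    (∃ f : κ → γ, ∀ w ∈ U, ∀ k, A w k → B w (f k)) ↔
      ∀ s ⊆ U, (∃ k, ∀ w ∈ s, A w k) → ∃ c, ∀ w ∈ s, B w c := by
  constructor
  · rintro ⟨f, hf⟩ s hs ⟨k, hk⟩
    exact ⟨f k, fun w hw => hf w (hs hw) k (hk w hw)⟩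
  · intro h
    have : ∀ k, ∃ c, ∀ w ∈ U, A w k → B w c := fun k =>
      let ⟨c, hc⟩ := h {w ∈ U | A w k} (Set.sep_subset _ _) ⟨k, fun _ hw => hw.2⟩
      ⟨c, fun w hw hk => hc w ⟨hw, hk⟩⟩
    exact (Classical.skolem.mp this).imp fun f hf w hw k => hf k w hw

theorem exists_fun_iff_forall_pair [Nonempty γ] (hB : ∀ w c c', B w c → B w c' → c = c') :
    (∃ f : κ → γ, ∀ w ∈ U, ∀ k, A w k → B w (f k)) ↔
      ∀ w ∈ U, ∀ w' ∈ U, (∃ k, A w k ∧ A w' k) → ∃ c, B w c ∧ B w' c := by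
  constructor
  · rintro ⟨f, hf⟩ w hw w' hw' ⟨k, hk, hk'⟩
    exact ⟨f k, hf w hw k hk, hf w' hw' k hk'⟩
  · intro h
    have : ∀ k, ∃ c, ∀ w ∈ U, A w k → B w c := by
      intro k
      by_cases hk : ∃ w₀ ∈ U, A w₀ k
      · obtain ⟨w₀, hw₀, hk₀⟩ := hk
        obtain ⟨c, hc, -⟩ := h w₀ hw₀ w₀ hw₀ ⟨k, hk₀, hk₀⟩
        refine ⟨c, fun w hw hkw => ?_⟩
        obtain ⟨c', hc'w, hc'₀⟩ := h w hw w₀ hw₀ ⟨k, hkw, hk₀⟩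
        rwa [hB w₀ c' c hc'₀ hc] at hc'w
      · exact ⟨Classical.arbitrary γ, fun w hw hkw => (hk ⟨w, hw, hkw⟩).elim⟩
    exact (Classical.skolem.mp this).imp fun f hf w hw k => hf k w hw

end Dependence

namespace KripkeModel

variable {P : Type} (M : KripkeModel P)

theorem subset_upset (t : Set M.W) : t ⊆ M.upset t := fun w hw => ⟨w, hw, M.refl w⟩

theorem upset_mono {t t' : Set M.W} (h : t' ⊆ t) : M.upset t' ⊆ M.upset t :=
  fun _ ⟨w, hw, hr⟩ => ⟨w, h hw, hr⟩

theorem upset_empty : M.upset ∅ = ∅ := by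
  simp [upset]

theorem singleton_subset_upset {v : M.W} {t : Set M.W} (hv : v ∈ M.upset t) :
    ∃ w ∈ t, {v} ⊆ M.upset {w} := by
  obtain ⟨w, hw, hr⟩ := hv
  exact ⟨w, hw, Set.singleton_subset_iff.mpr ⟨w, rfl, hr⟩⟩

end KripkeModel

section Support

variable {P : Type} (M : KripkeModel P)

theorem support_anti (φ : Formula P) {t t' : Set M.W} (h : t' ⊆ t) (hs : support M φ t) :
    support M φ t' := by
  induction φ generalizing t t' with
  | atom p => exact fun w hw => hs w (h hw)
  | bot => exact Set.subset_eq_empty h hs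
  | and φ ψ ihφ ihψ => exact ⟨ihφ h hs.1, ihψ h hs.2⟩
  | or φ ψ ihφ ihψ =>
    obtain ⟨t₁, t₂, rfl, h₁, h₂⟩ := hs
    refine ⟨t' ∩ t₁, t' ∩ t₂, ?_, ihφ Set.inter_subset_right h₁, ihψ Set.inter_subset_right h₂⟩
    rw [← Set.inter_union_distrib_left, Set.inter_eq_left.mpr h]
  | impl φ ψ _ _ => exact fun s hsub => hs s (hsub.trans (M.upset_mono h))
  | iorr φ ψ ihφ ihψ => exact hs.imp (ihφ h) (ihψ h)

theorem support_empty (φ : Formula P) : support M φ ∅ := by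
  induction φ with
  | atom p => exact fun w hw => absurd hw (Set.notMem_empty w)
  | bot => rfl
  | and _ _ ih₁ ih₂ => exact ⟨ih₁, ih₂⟩
  | or _ _ ih₁ ih₂ => exact ⟨∅, ∅, (Set.union_empty _).symm, ih₁, ih₂⟩
  | impl φ ψ _ ih₂ =>
    intro t' h _
    rwa [Set.subset_eq_empty h M.upset_empty]
  | iorr _ _ ih₁ _ => exact Or.inl ih₁

theorem truth_or_iff {w : M.W} {φ ψ : Formula P} :
    truth M w (φ.or ψ) ↔ truth M w φ ∨ truth M w ψ := by
  constructor
  · rintro ⟨t₁, t₂, hw, h₁, h₂⟩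
    rcases (Set.ext_iff.mp hw w).mp rfl with hw₁ | hw₂
    · exact Or.inl (support_anti M φ (Set.singleton_subset_iff.mpr hw₁) h₁)
    · exact Or.inr (support_anti M ψ (Set.singleton_subset_iff.mpr hw₂) h₂)
  · rintro (h | h)
    · exact ⟨{w}, ∅, (Set.union_empty _).symm, h, support_empty M ψ⟩
    · exact ⟨∅, {w}, (Set.empty_union _).symm, support_empty M φ, h⟩

theorem support_of_forall_truth {φ : Formula P} (hφ : φ.standard) {t : Set M.W}
    (h : ∀ w ∈ t, truth M w φ) : support M φ t := by
  induction φ generalizing t with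
  | atom p => exact fun w hw => h w hw w rfl
  | bot => exact Set.eq_empty_of_forall_notMem fun w hw => Set.singleton_ne_empty w (h w hw)
  | and φ ψ ihφ ihψ =>
    exact ⟨ihφ hφ.1 fun w hw => (h w hw).1, ihψ hφ.2 fun w hw => (h w hw).2⟩
  | or φ ψ ihφ ihψ =>
    refine ⟨{w ∈ t | truth M w φ}, {w ∈ t | truth M w ψ}, ?_,
      ihφ hφ.1 fun w hw => hw.2, ihψ hφ.2 fun w hw => hw.2⟩
    rw [← Set.sep_or, Set.sep_eq_self_iff_mem_true.mpr fun w hw => (truth_or_iff M).mp (h w hw)]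
  | impl φ ψ _ ihψ =>
    intro s hsub hs
    refine ihψ hφ.2 fun v hv => ?_
    obtain ⟨w, hw, hvw⟩ := M.singleton_subset_upset (hsub hv)
    exact h w hw {v} hvw (support_anti M φ (Set.singleton_subset_iff.mpr hv) hs)
  | iorr => exact hφ.elim

theorem truthConditional_of_standard {φ : Formula P} (hφ : φ.standard) : truthConditional φ :=
  fun M _ => ⟨fun hs _ hw => support_anti M φ (Set.singleton_subset_iff.mpr hw) hs,
    support_of_forall_truth M hφ⟩

theorem tvalIs_unique {w : M.W} (φ : Formula P) {b c : Bool}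
    (hb : tvalIs M w φ b) (hc : tvalIs M w φ c) : b = c := by
  have not_both : ¬ (truth M w φ ∧ truth M w φ.neg) := fun ⟨h, hneg⟩ =>
    Set.singleton_ne_empty w (hneg {w} (M.subset_upset {w}) h)
  cases b <;> cases c
  exacts [rfl, (not_both ⟨hc, hb⟩).elim, (not_both ⟨hb, hc⟩).elim, rfl]

theorem support_question_iff {φ : Formula P} (hφ : φ.standard) {s : Set M.W} :
    support M φ.question s ↔ ∃ b, ∀ w ∈ s, tvalIs M w φ b := by
  rw [Bool.exists_bool, or_comm]
  exact or_congr (truthConditional_of_standard hφ M s)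
    (truthConditional_of_standard (φ := φ.neg) ⟨hφ, trivial⟩ M s)

theorem support_bigConj (l : List (Formula P)) (t : Set M.W) :
    support M (bigConj l) t ↔ ∀ φ ∈ l, support M φ t := by
  match l with
  | [] => exact iff_of_true (fun _ _ h => h) (fun _ h => absurd h List.not_mem_nil)
  | [φ] => simp [bigConj]
  | φ :: ψ :: rest =>
    rw [List.forall_mem_cons, ← support_bigConj (ψ :: rest) t]
    rfl

theorem support_bigConj_questions_iff {n : ℕ} {α : Fin n → Formula P}
    (hα : ∀ i, (α i).standard) {s : Set M.W} :
    support M (bigConj (List.ofFn fun i => (α i).question)) s ↔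
      ∃ b : Fin n → Bool, ∀ w ∈ s, ∀ i, tvalIs M w (α i) (b i) := by
  simp only [support_bigConj, List.forall_mem_ofFn_iff, support_question_iff M (hα _),
    Classical.skolem]
  exact exists_congr fun b => forall_comm.trans (forall_congr' fun w => forall_comm)

end Support

theorem generalized_dependency_characterization_general {P : Type} (M : KripkeModel P)
    (t : Set M.W) (n : ℕ) (α : Fin n → Formula P) (β : Formula P)
    (hα : ∀ i, (α i).standard) (hβ : β.standard) :
    (support M (Formula.impl (bigConj (List.ofFn fun i => (α i).question))
        β.question) t ↔
      ∀ w ∈ M.upset t, ∀ w' ∈ M.upset t,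
        (∀ i : Fin n, ∃ b : Bool, tvalIs M w (α i) b ∧ tvalIs M w' (α i) b) →
        (∃ b : Bool, tvalIs M w β b ∧ tvalIs M w' β b)) ∧
    (support M (Formula.impl (bigConj (List.ofFn fun i => (α i).question))
        β.question) t ↔
      ∃ f : (Fin n → Bool) → Bool, ∀ w ∈ M.upset t, ∀ b : Fin n → Bool,
        (∀ i : Fin n, tvalIs M w (α i) (b i)) → tvalIs M w β (f b)) := by
  have h13 := (forall₂_congr fun s _ => imp_congr (support_bigConj_questions_iff M hα)
    (support_question_iff M hβ)).trans (exists_fun_iff_forall_subset (U := M.upset t)).symm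
  have h23 := exists_fun_iff_forall_pair (U := M.upset t)
    (A := fun w (b : Fin n → Bool) => ∀ i, tvalIs M w (α i) (b i)) (B := fun w => tvalIs M w β)
    fun _ _ _ => tvalIs_unique M β
  exact ⟨h13.trans (h23.trans (by simp only [Classical.skolem, forall_and])), h13⟩

/-- generalized characterization of dependency for
?α₁ ∧ ⋯ ∧ ?αₙ → ?β: the three conditions (1), (2), (3) are equivalent. -/
theorem generalized_dependency_characterization {P : Type} (M : KripkeModel P)
    (t : Set M.W) (n : ℕ) (hn : 0 < n) (α : Fin n → Formula P) (β : Formula P)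
    (hα : ∀ i, (α i).standard) (hβ : β.standard) :
    (support M (Formula.impl (bigConj (List.ofFn fun i => (α i).question))
        β.question) t ↔
      ∀ w ∈ M.upset t, ∀ w' ∈ M.upset t,
        (∀ i : Fin n, ∃ b : Bool, tvalIs M w (α i) b ∧ tvalIs M w' (α i) b) →
        (∃ b : Bool, tvalIs M w β b ∧ tvalIs M w' β b)) ∧
    (support M (Formula.impl (bigConj (List.ofFn fun i => (α i).question))
        β.question) t ↔
      ∃ f : (Fin n → Bool) → Bool, ∀ w ∈ M.upset t, ∀ b : Fin n → Bool,
        (∀ i : Fin n, tvalIs M w (α i) (b i)) → tvalIs M w β (f b)) :=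
  generalized_dependency_characterization_general M t n α β hα hβ
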